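/- Consider the TRS R = { f(x) → g(x,x,x), g(x, u_i(y), v_i(z)) → h(x,y,z), h(x, u_i(y), v_i(z)) → h(x,y,z), h(x, ε, ε) → f(x) : 1 ≤ i ≤ n } built from a Post correspondence instance ⟨u_1,v_1⟩,…,⟨u_n,v_n⟩ over alphabet Σ (strings encoded as compositions of unary symbols applied to a constant ε). Then R is right-flat, and R is innermost non-terminating if and only if the PCP instance has a solution, i.e., there exist k > 0 and i_1,…,i_k ∈ {1,…,n} with u_{i_1}⋯u_{i_k} = v_{i_1}⋯v_{i_k}. -/

import Mathlib

/-- First-order terms over function symbols `F` and variables `V`. -/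
inductive Tm (F V : Type) : Type
  | var : V → Tm F V
  | app : F → List (Tm F V) → Tm F V

namespace Tm

variable {F V : Type}

/-- Height of a term: 0 for variables and constants. -/
def height : Tm F V → ℕ
  | var _ => 0
  | app _ ts => ts.attach.foldr (fun t m => max (height t.1 + 1) m) 0
decreasing_by all_goals (simp_wf; have := List.sizeOf_lt_of_mem t.2; omega)

/-- Size (number of positions) of a term. -/
def size : Tm F V → ℕ
  | var _ => 1
  | app _ ts => 1 + (ts.attach.map (fun t => size t.1)).sum
decreasing_by all_goals (simp_wf; have := List.sizeOf_lt_of_mem t.2; omega)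

/-- Apply a substitution. -/
def subst (σ : V → Tm F V) : Tm F V → Tm F V
  | var x => σ x
  | app f ts => app f (ts.attach.map (fun t => subst σ t.1))
decreasing_by all_goals (simp_wf; have := List.sizeOf_lt_of_mem t.2; omega)

/-- List of variable occurrences. -/
def varList : Tm F V → List V
  | var x => [x]
  | app _ ts => (ts.attach.map (fun t => varList t.1)).flatten
decreasing_by all_goals (simp_wf; have := List.sizeOf_lt_of_mem t.2; omega)

/-- List of function-symbol occurrences. -/
def symList : Tm F V → List F
  | var _ => []
  | app f ts => f :: (ts.attach.map (fun t => symList t.1)).flatten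
decreasing_by all_goals (simp_wf; have := List.sizeOf_lt_of_mem t.2; omega)

/-- The subterm at a position (positions are lists of argument indices). -/
def subAt : Tm F V → List ℕ → Option (Tm F V)
  | t, [] => some t
  | var _, _ :: _ => none
  | app _ ts, i :: p => match ts[i]? with
      | some u => subAt u p
      | none => none

/-- Replace the subterm at a position. -/
def replAt : Tm F V → List ℕ → Tm F V → Option (Tm F V)
  | _, [], s => some s
  | var _, _ :: _, _ => none
  | app f ts, i :: p, s => match ts[i]? with
      | some u => (replAt u p s).map (fun u' => app f (ts.set i u'))
      | none => none

/-- `p` is a position of `t`. -/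
def IsPos (t : Tm F V) (p : List ℕ) : Prop := (t.subAt p).isSome

/-- A term is a constant if it is a nullary function application. -/
def IsConst (t : Tm F V) : Prop := ∃ f : F, t = app f []

def Ground (t : Tm F V) : Prop := t.varList = []

/-- A term is linear if each variable occurs at most once. -/
def Linear (t : Tm F V) : Prop := t.varList.Nodup

/-- A term is flat if its height is at most 1. -/
def Flat (t : Tm F V) : Prop := t.height ≤ 1

/-- A term is shallow if all variables occur at depth at most 1. -/
def Shallow (t : Tm F V) : Prop :=
  ∀ (p : List ℕ) (x : V), t.subAt p = some (var x) → p.length ≤ 1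

end Tm

/-- A rewrite rule. -/
structure Rule (F V : Type) where
  lhs : Tm F V
  rhs : Tm F V

namespace Rule

variable {F V : Type}

/-- Standard well-formedness: the lhs is not a variable and variables of the
rhs occur in the lhs. -/
def WF (r : Rule F V) : Prop :=
  (∀ x : V, r.lhs ≠ Tm.var x) ∧ ∀ x ∈ r.rhs.varList, x ∈ r.lhs.varList

def RightFlat (r : Rule F V) : Prop := r.rhs.Flat
def RightLinear (r : Rule F V) : Prop := r.rhs.Linear
def RightShallow (r : Rule F V) : Prop := r.rhs.Shallow
def FlatRule (r : Rule F V) : Prop := r.lhs.Flat ∧ r.rhs.Flat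
def ShallowRule (r : Rule F V) : Prop := r.lhs.Shallow ∧ r.rhs.Shallow
def Collapsing (r : Rule F V) : Prop := ∃ x : V, r.rhs = Tm.var x

/-- A permutative rule: linear, flat, height-preserving and variable-preserving. -/
def Permutative (r : Rule F V) : Prop :=
  r.WF ∧ r.lhs.Linear ∧ r.rhs.Linear ∧ r.lhs.Flat ∧ r.rhs.Flat ∧
    r.lhs.height = r.rhs.height ∧ ∀ x : V, x ∈ r.lhs.varList ↔ x ∈ r.rhs.varList

end Rule

/-- A permutative theory: a symmetric set of permutative rules. -/
def PermutativeTheory {F V : Type} (E : Set (Rule F V)) : Prop :=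
  (∀ r ∈ E, r.Permutative) ∧ ∀ r ∈ E, (⟨r.rhs, r.lhs⟩ : Rule F V) ∈ E

section Rewriting

variable {F V : Type}

/-- One rewrite step with rule `l → r` at position `p` using substitution `σ`. -/
def RewWith (l r : Tm F V) (p : List ℕ) (σ : V → Tm F V) (s t : Tm F V) : Prop :=
  s.subAt p = some (l.subst σ) ∧ s.replAt p (r.subst σ) = some t

/-- One rewrite step with TRS `R` at position `p`. -/
def RewAt (R : Set (Rule F V)) (p : List ℕ) (s t : Tm F V) : Prop :=
  ∃ r ∈ R, ∃ σ : V → Tm F V, RewWith r.lhs r.rhs p σ s t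

/-- One rewrite step with TRS `R`. -/
def Rew (R : Set (Rule F V)) (s t : Tm F V) : Prop := ∃ p, RewAt R p s t

/-- Reachability: reflexive-transitive closure of one-step rewriting. -/
def Reach (R : Set (Rule F V)) : Tm F V → Tm F V → Prop :=
  Relation.ReflTransGen (Rew R)

/-- One rewrite step with `R` modulo `E` : `s →E* · →R · →E* t`. -/
def RewMod (R E : Set (Rule F V)) (s t : Tm F V) : Prop :=
  ∃ u v, Reach E s u ∧ Rew R u v ∧ Reach E v t

/-- `R/E` is terminating from `s`. -/
def TerminatingFrom (R E : Set (Rule F V)) (s : Tm F V) : Prop :=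
  ¬ ∃ f : ℕ → Tm F V, f 0 = s ∧ ∀ n, RewMod R E (f n) (f (n + 1))

/-- `R/E` is terminating. -/
def Terminating (R E : Set (Rule F V)) : Prop :=
  ¬ ∃ f : ℕ → Tm F V, ∀ n, RewMod R E (f n) (f (n + 1))

/-- `t` is reachable from some constant. -/
def FromConst (R : Set (Rule F V)) (t : Tm F V) : Prop :=
  ∃ f : F, Reach R (Tm.app f []) t

/-- The measure `‖t‖`: number of positions of `t` whose subterm is not reachable
from a constant. -/
noncomputable def meas (R : Set (Rule F V)) (t : Tm F V) : ℕ :=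
  Nat.card {p : List ℕ // ∃ u, t.subAt p = some u ∧ ¬ FromConst R u}

/-- `t` is a normal form w.r.t. `R/E`. -/
def NFMod (R E : Set (Rule F V)) (t : Tm F V) : Prop := ¬ ∃ t', RewMod R E t t'

/-- `t` is `R`-irreducible. -/
def NF (R : Set (Rule F V)) (t : Tm F V) : Prop := ¬ ∃ t', Rew R t t'

/-- Innermost rewrite step with `R` (plain rewriting): all proper subterms of the
redex are irreducible. -/
def IRew (R : Set (Rule F V)) (s t : Tm F V) : Prop :=
  ∃ p, RewAt R p s t ∧
    ∀ (q : List ℕ) (w : Tm F V), q ≠ [] → s.subAt (p ++ q) = some w → NF R w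

/-- Innermost rewrite step with `R` modulo `E`. -/
def IRewMod (R E : Set (Rule F V)) (s t : Tm F V) : Prop :=
  ∃ u v, ∃ p : List ℕ, Reach E s u ∧ RewAt R p u v ∧ Reach E v t ∧
    ∀ (q : List ℕ) (w : Tm F V), q ≠ [] → u.subAt (p ++ q) = some w → NFMod R E w

/-- Innermost termination of `R/E`. -/
def ITerminating (R E : Set (Rule F V)) : Prop :=
  ¬ ∃ f : ℕ → Tm F V, ∀ n, IRewMod R E (f n) (f (n + 1))

end Rewriting

section Marking

variable {F V : Type}

/-- A derivation of length `n` with explicit rules, positions and substitutions. -/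
def IsDeriv (R : Set (Rule F V)) (n : ℕ) (s : ℕ → Tm F V) (rl : ℕ → Rule F V)
    (pp : ℕ → List ℕ) (sb : ℕ → V → Tm F V) : Prop :=
  ∀ i < n, rl i ∈ R ∧ RewWith (rl i).lhs (rl i).rhs (pp i) (sb i) (s i) (s (i + 1))

/-- `p'` is strictly below `p̄` : `p̄` is a proper prefix of `p'`. -/
def StrictBelow (pbar p : List ℕ) : Prop := ∃ q, q ≠ [] ∧ p = pbar ++ q

/-- A marking of a derivation. -/
def IsMarking (n : ℕ) (s : ℕ → Tm F V) (rl : ℕ → Rule F V)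
    (pp : ℕ → List ℕ) (M : ℕ → List ℕ → Tm F V) : Prop :=
  (∀ p t, (s 0).subAt p = some t → M 0 p = t) ∧
  ∀ i < n,
    (∀ p, (s (i + 1)).IsPos p → ¬ StrictBelow (pp i) p → M (i + 1) p = M i p) ∧
    (∀ (j : ℕ) (u : Tm F V), (rl i).rhs.subAt [j] = some u → u.IsConst →
        M (i + 1) (pp i ++ [j]) = u) ∧
    (∀ (j : ℕ) (p₁ : List ℕ) (x : V), (rl i).rhs.subAt [j] = some (Tm.var x) →
        (s (i + 1)).IsPos (pp i ++ j :: p₁) →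
        ∃ q₀ : List ℕ, (rl i).lhs.subAt q₀ = some (Tm.var x) ∧
          M (i + 1) (pp i ++ j :: p₁) = M i (pp i ++ q₀ ++ p₁))

end Marking

section WFSig

variable {F V : Type}

/-- Terms respecting the arity function. -/
inductive WFT (ar : F → ℕ) : Tm F V → Prop
  | var (x : V) : WFT ar (Tm.var x)
  | app (f : F) (ts : List (Tm F V)) : ts.length = ar f →
      (∀ t ∈ ts, WFT ar t) → WFT ar (Tm.app f ts)

end WFSig

/-- Signature for the PCP reduction: one unary symbol per letter, a constant `ε`, and
the symbols `f`, `g`, `h`. -/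
inductive PCPSym (A : Type) : Type
  | letter : A → PCPSym A
  | eps : PCPSym A
  | fS : PCPSym A
  | gS : PCPSym A
  | hS : PCPSym A

/-- Encode a string as a composition of unary symbols applied to a term. -/
def encodeStr {A V : Type} : List A → Tm (PCPSym A) V → Tm (PCPSym A) V
  | [], t => t
  | a :: w, t => Tm.app (PCPSym.letter a) [encodeStr w t]

/-- The TRS `R` of the reduction:
`f(x) → g(x,x,x)`, `g(x, uᵢ(y), vᵢ(z)) → h(x,y,z)`,
`h(x, uᵢ(y), vᵢ(z)) → h(x,y,z)`, `h(x, ε, ε) → f(x)`. -/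
def pcpTRS {A : Type} (n : ℕ) (u v : Fin n → List A) : Set (Rule (PCPSym A) ℕ) :=
  {(⟨Tm.app PCPSym.fS [Tm.var 0],
     Tm.app PCPSym.gS [Tm.var 0, Tm.var 0, Tm.var 0]⟩ : Rule (PCPSym A) ℕ)} ∪
  {r | ∃ i : Fin n,
      r = ⟨Tm.app PCPSym.gS
              [Tm.var 0, encodeStr (u i) (Tm.var 1), encodeStr (v i) (Tm.var 2)],
           Tm.app PCPSym.hS [Tm.var 0, Tm.var 1, Tm.var 2]⟩ ∨
      r = ⟨Tm.app PCPSym.hS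
              [Tm.var 0, encodeStr (u i) (Tm.var 1), encodeStr (v i) (Tm.var 2)],
           Tm.app PCPSym.hS [Tm.var 0, Tm.var 1, Tm.var 2]⟩} ∪
  {(⟨Tm.app PCPSym.hS [Tm.var 0, Tm.app PCPSym.eps [], Tm.app PCPSym.eps []],
     Tm.app PCPSym.fS [Tm.var 0]⟩ : Rule (PCPSym A) ℕ)}

/-! If `w = u i₁ ⋯ u iₖ = v i₁ ⋯ v iₖ` with `k > 0` and `a` encodes `w`, then
`f(a) → g(a,a,a) → h(a, …) →* h(a,ε,ε) → f(a)` is an innermost cycle: all arguments are strings,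
hence normal forms.

Conversely, assume there is no solution. Give every node a potential depending only on its symbol
and on the *spines* of its arguments (the letters on top of the argument and whether they are
followed by `ε`), and let the weight of a term be the sum of the potentials of its nodes. Redexes
are rooted at `f`, `g` or `h`, so rewriting never changes a spine, and an innermost step changes
only the potential at the redex. Its arguments are normal forms, whose weight is `0` because the
potential vanishes at non-redexes, so the weight drops exactly when the potential of the redex
does. The potential of a redex bounds the number of root steps that can still follow at that
node; this number is finite since, without a solution, after `f(a) → g(a,a,a)` the pair `(a,a)`
can never be stripped down to `(ε,ε)`. -/

namespace List

theorem map_set_of_apply_eq {β γ : Type} {g : β → γ} {l : List β} {j : ℕ}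
    (hj : j < l.length) {y : β} (hy : g y = g l[j]) : (l.set j y).map g = l.map g := by
  rw [map_set, hy, ← getElem_map g (h := by simpa using hj), set_getElem_self]

theorem sum_set_lt {l : List ℕ} {j a : ℕ} (hj : j < l.length) (ha : a < l[j]) :
    (l.set j a).sum < l.sum := by
  have h := sum_set l j a
  have h' := sum_set l j l[j]
  rw [set_getElem_self] at h'
  simp only [hj, if_true] at h h'
  omega

end List

theorem exists_chain_of_transGen_self {α : Type} {r : α → α → Prop} {a : α}
    (h : Relation.TransGen r a a) : ∃ f : ℕ → α, ∀ k, r (f k) (f (k + 1)) := by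
  have step : ∀ x : {x // Relation.TransGen r x x}, ∃ y : {y // Relation.TransGen r y y},
      r x y := by
    rintro ⟨x, hx⟩
    obtain ⟨y, hxy, hyx⟩ := Relation.TransGen.head'_iff.mp hx
    exact ⟨⟨y, Relation.TransGen.tail' hyx hxy⟩, hxy⟩
  choose g hg using step
  refine ⟨fun k => (g^[k] ⟨a, h⟩).1, fun k => ?_⟩
  simpa only [Function.iterate_succ_apply'] using hg (g^[k] ⟨a, h⟩)

namespace Tm

variable {F V : Type}

@[simp] theorem subst_var (σ : V → Tm F V) (x : V) : (var x).subst σ = σ x := by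
  rw [subst]

theorem subst_app (σ : V → Tm F V) (f : F) (ts : List (Tm F V)) :
    (app f ts).subst σ = app f (ts.map (subst σ)) := by
  rw [subst, List.attach_map_val]

@[simp] theorem subAt_nil (t : Tm F V) : t.subAt [] = some t := by
  rw [subAt]

@[simp] theorem subAt_var_cons (x : V) (j : ℕ) (p : List ℕ) :
    (var x : Tm F V).subAt (j :: p) = none := by
  rw [subAt]

@[simp] theorem subAt_app_cons (f : F) (ts : List (Tm F V)) (j : ℕ) (p : List ℕ) :
    (app f ts).subAt (j :: p) = ts[j]?.bind (subAt · p) := by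
  rw [subAt]
  cases ts[j]? <;> rfl

@[simp] theorem replAt_nil (t s : Tm F V) : t.replAt [] s = some s := by
  rw [replAt]

@[simp] theorem replAt_app_cons (f : F) (ts : List (Tm F V)) (j : ℕ) (p : List ℕ)
    (s : Tm F V) :
    (app f ts).replAt (j :: p) s =
      ts[j]?.bind fun x => (x.replAt p s).map fun x' => app f (ts.set j x') := by
  rw [replAt]
  cases ts[j]? <;> rfl

theorem subAt_append (t : Tm F V) (q p : List ℕ) :
    t.subAt (q ++ p) = (t.subAt q).bind (subAt · p) := by
  induction q generalizing t with
  | nil => simp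
  | cons j q ih =>
    cases t with
    | var x => simp
    | app f ts => simp [ih, Option.bind_assoc]

theorem exists_replAt_append {t w w' s : Tm F V} {q p : List ℕ}
    (hq : t.subAt q = some w) (hp : w.replAt p s = some w') :
    ∃ t', t.replAt (q ++ p) s = some t' := by
  induction q generalizing t with
  | nil => simp_all
  | cons j q ih =>
    cases t with
    | var x => simp at hq
    | app f ts =>
      obtain ⟨x, hx, hxq⟩ := Option.bind_eq_some_iff.mp (by simpa using hq)
      obtain ⟨x', hx'⟩ := ih hxq
      exact ⟨app f (ts.set j x'), by simp [hx, hx']⟩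

end Tm

section Rewriting

variable {F V : Type} {R : Set (Rule F V)}

open Tm

theorem rewAt_nil_iff {s t : Tm F V} :
    RewAt R [] s t ↔ ∃ r ∈ R, ∃ σ, s = r.lhs.subst σ ∧ t = r.rhs.subst σ := by
  simp [RewAt, RewWith, eq_comm]

theorem RewAt.exists_rewAt_nil {p : List ℕ} {s t : Tm F V} (h : RewAt R p s t) :
    ∃ w, s.subAt p = some w ∧ ∃ w', RewAt R [] w w' := by
  obtain ⟨r, hr, σ, hs, -⟩ := h
  exact ⟨_, hs, _, rewAt_nil_iff.mpr ⟨r, hr, σ, rfl, rfl⟩⟩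

theorem RewAt.app_cons {f : F} {ts : List (Tm F V)} {j : ℕ} {p : List ℕ} {t : Tm F V}
    (h : RewAt R (j :: p) (app f ts) t) :
    ∃ x x', ts[j]? = some x ∧ RewAt R p x x' ∧ t = app f (ts.set j x') := by
  obtain ⟨r, hr, σ, hs, ht⟩ := h
  obtain ⟨x, hx, hxs⟩ := Option.bind_eq_some_iff.mp (by simpa using hs)
  simp only [replAt_app_cons, hx, Option.bind_some, Option.map_eq_some_iff] at ht
  obtain ⟨x', hx', rfl⟩ := ht
  exact ⟨x, x', hx, ⟨r, hr, σ, hxs, hx'⟩, rfl⟩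

theorem RewAt.not_var_cons {x : V} {j : ℕ} {p : List ℕ} {t : Tm F V} :
    ¬ RewAt R (j :: p) (var x) t := by
  rintro ⟨r, -, σ, hs, -⟩
  simp at hs

theorem NF.subAt {s w : Tm F V} (hs : NF R s) {q : List ℕ} (hq : s.subAt q = some w) :
    NF R w := by
  rintro ⟨w', p, r, hr, σ, hw, hw'⟩
  obtain ⟨s', hs'⟩ := exists_replAt_append hq hw'
  exact hs ⟨s', q ++ p, r, hr, σ, by rw [subAt_append, hq]; exact hw, hs'⟩

theorem forall_subAt_nf_iff {f : F} {ts : List (Tm F V)} :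
    (∀ q w, q ≠ [] → (app f ts).subAt q = some w → NF R w) ↔ ∀ x ∈ ts, NF R x := by
  constructor
  · intro h x hx
    obtain ⟨j, hj, rfl⟩ := List.mem_iff_getElem.mp hx
    exact h [j] _ (List.cons_ne_nil _ _) (by simp [hj])
  · rintro h (_ | ⟨j, q⟩) w hq hw
    · exact absurd rfl hq
    obtain ⟨x, hx, hxw⟩ := Option.bind_eq_some_iff.mp (by simpa using hw)
    exact (h x (List.mem_of_getElem? hx)).subAt hxw

theorem iRew_of_rewAt_nil {f : F} {ts : List (Tm F V)} {t : Tm F V}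
    (h : RewAt R [] (app f ts) t) (hts : ∀ x ∈ ts, NF R x) : IRew R (app f ts) t :=
  ⟨[], h, by simpa using forall_subAt_nf_iff.mpr hts⟩

end Rewriting

namespace Tm

variable {F V α : Type}

def weight (W : F → List α → ℕ) (ab : Tm F V → α) : Tm F V → ℕ
  | var _ => 0
  | app f ts => W f (ts.map ab) + (ts.attach.map fun t => weight W ab t.1).sum
decreasing_by all_goals (simp_wf; have := List.sizeOf_lt_of_mem t.2; omega)

variable {W : F → List α → ℕ} {ab : Tm F V → α}

@[simp] theorem weight_var (x : V) : weight W ab (var x) = 0 := by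
  rw [weight]

theorem weight_app (f : F) (ts : List (Tm F V)) :
    weight W ab (app f ts) = W f (ts.map ab) + (ts.map (weight W ab)).sum := by
  rw [weight, List.attach_map_val]

variable {R : Set (Rule F V)}

theorem weight_eq_zero_of_nf (hW : ∀ f ts, NF R (app f ts) → W f (ts.map ab) = 0) :
    ∀ {t : Tm F V}, NF R t → weight W ab t = 0
  | var _, _ => weight_var _
  | app f ts, ht => by
    rw [weight_app, hW f ts ht, zero_add, List.sum_eq_zero]
    intro m hm
    obtain ⟨x, hx, rfl⟩ := List.mem_map.mp hm
    have := List.sizeOf_lt_of_mem hx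
    exact weight_eq_zero_of_nf hW (forall_subAt_nf_iff.mp (fun _ _ _ hq => ht.subAt hq) x hx)
termination_by t => sizeOf t
decreasing_by simp_wf; omega

theorem weight_app_of_nf (hW : ∀ f ts, NF R (app f ts) → W f (ts.map ab) = 0)
    {f : F} {ts : List (Tm F V)} (hts : ∀ x ∈ ts, NF R x) :
    weight W ab (app f ts) = W f (ts.map ab) := by
  rw [weight_app, List.sum_eq_zero, add_zero]
  intro m hm
  obtain ⟨x, hx, rfl⟩ := List.mem_map.mp hm
  exact weight_eq_zero_of_nf hW (hts x hx)

theorem apply_eq_of_rewAt {N : F → List α → α} (hab : ∀ f ts, ab (app f ts) = N f (ts.map ab))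
    (hab_root : ∀ s t, RewAt R [] s t → ab t = ab s) :
    ∀ {p : List ℕ} {s t : Tm F V}, RewAt R p s t → ab t = ab s
  | [], _, _, h => hab_root _ _ h
  | _ :: _, var _, _, h => absurd h RewAt.not_var_cons
  | j :: _, app f ts, _, h => by
    obtain ⟨x, x', hx, hxx', rfl⟩ := h.app_cons
    obtain ⟨hj, rfl⟩ := List.getElem?_eq_some_iff.mp hx
    rw [hab, hab, List.map_set_of_apply_eq hj (apply_eq_of_rewAt hab hab_root hxx')]

theorem weight_lt_of_rewAt {N : F → List α → α} (hab : ∀ f ts, ab (app f ts) = N f (ts.map ab))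
    (hab_root : ∀ s t, RewAt R [] s t → ab t = ab s)
    (hroot : ∀ s t, RewAt R [] s t → (∀ q w, q ≠ [] → s.subAt q = some w → NF R w) →
      weight W ab t < weight W ab s) :
    ∀ {p : List ℕ} {s t : Tm F V}, RewAt R p s t →
      (∀ q w, q ≠ [] → s.subAt (p ++ q) = some w → NF R w) → weight W ab t < weight W ab s
  | [], _, _, h, hin => hroot _ _ h hin
  | _ :: _, var _, _, h, _ => absurd h RewAt.not_var_cons
  | j :: p, app f ts, _, h, hin => by
    obtain ⟨x, x', hx, hxx', rfl⟩ := h.app_cons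
    have hlt : weight W ab x' < weight W ab x :=
      weight_lt_of_rewAt hab hab_root hroot hxx' fun q w hq hw =>
        hin q w hq (by simp [subAt_append, hx, ← hw])
    obtain ⟨hj, rfl⟩ := List.getElem?_eq_some_iff.mp hx
    rw [weight_app, weight_app, List.map_set_of_apply_eq hj (apply_eq_of_rewAt hab hab_root hxx'),
      List.map_set]
    have := List.sum_set_lt (l := ts.map (weight W ab)) (by simpa using hj) (by simpa using hlt)
    omega

end Tm

theorem not_exists_iRew_chain_of_weight {F V α : Type} {R : Set (Rule F V)}
    {W : F → List α → ℕ} {ab : Tm F V → α} {N : F → List α → α}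
    (hab : ∀ f ts, ab (.app f ts) = N f (ts.map ab))
    (hab_root : ∀ s t, RewAt R [] s t → ab t = ab s)
    (hroot : ∀ s t, RewAt R [] s t → (∀ q w, q ≠ [] → s.subAt q = some w → NF R w) →
      Tm.weight W ab t < Tm.weight W ab s) :
    ¬ ∃ f : ℕ → Tm F V, ∀ k, IRew R (f k) (f (k + 1)) := by
  rintro ⟨f, hf⟩
  obtain ⟨k, hk⟩ := WellFounded.not_rel_apply_succ (r := (· < ·)) (Tm.weight W ab ∘ f)
  obtain ⟨p, hp, hin⟩ := hf k
  exact hk (Tm.weight_lt_of_rewAt hab hab_root hroot hp hin)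

inductive Tiling {A ι : Type} (u v : ι → List A) : List A → List A → Prop
  | nil : Tiling u v [] []
  | cons (i : ι) {b c : List A} : Tiling u v b c → Tiling u v (u i ++ b) (v i ++ c)

namespace Tiling

variable {A ι : Type} {u v : ι → List A}

theorem flatten_ofFn {k : ℕ} (idx : Fin k → ι) :
    Tiling u v (List.ofFn fun j => u (idx j)).flatten (List.ofFn fun j => v (idx j)).flatten := by
  induction k with
  | zero => simpa using Tiling.nil
  | succ k ih => simpa [List.ofFn_succ] using (ih (idx ∘ Fin.succ)).cons (idx 0)

theorem exists_ofFn {b c : List A} (h : Tiling u v b c) :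
    ∃ k, ∃ idx : Fin k → ι,
      b = (List.ofFn fun j => u (idx j)).flatten ∧ c = (List.ofFn fun j => v (idx j)).flatten := by
  induction h with
  | nil => exact ⟨0, Fin.elim0, by simp, by simp⟩
  | cons i _ ih =>
    obtain ⟨k, idx, rfl, rfl⟩ := ih
    exact ⟨k + 1, Fin.cons i idx, by simp [List.ofFn_succ], by simp [List.ofFn_succ]⟩

end Tiling

def PCPSolvable {A ι : Type} (u v : ι → List A) : Prop :=
  ∃ i b c, Tiling u v b c ∧ u i ++ b = v i ++ c

namespace PCPSolvable

variable {A ι : Type} {u v : ι → List A}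

theorem iff_exists_ofFn :
    PCPSolvable u v ↔ ∃ k, 0 < k ∧ ∃ idx : Fin k → ι,
      (List.ofFn fun j => u (idx j)).flatten = (List.ofFn fun j => v (idx j)).flatten := by
  constructor
  · rintro ⟨i, b, c, hbc, h⟩
    obtain ⟨k, idx, rfl, rfl⟩ := hbc.exists_ofFn
    exact ⟨k + 1, k.succ_pos, Fin.cons i idx, by simpa [List.ofFn_succ] using h⟩
  · rintro ⟨_ | k, hk, idx, h⟩
    · exact absurd hk (lt_irrefl 0)
    · refine ⟨idx 0, _, _, Tiling.flatten_ofFn (idx ∘ Fin.succ), ?_⟩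
      simpa [List.ofFn_succ] using h

theorem tile_length_pos (hns : ¬ PCPSolvable u v) (i : ι) :
    0 < (u i).length + (v i).length := by
  by_contra h
  obtain ⟨hu, hv⟩ : u i = [] ∧ v i = [] := by simpa using h
  exact hns ⟨i, [], [], .nil, by simp [hu, hv]⟩

theorem eq_nil_of_tiling_self (hns : ¬ PCPSolvable u v) {w : List A} (h : Tiling u v w w) :
    w = [] := by
  suffices ∀ b c, Tiling u v b c → b = c → b = [] from this w w h rfl
  rintro _ _ (_ | ⟨i, hbc⟩) he
  · rfl
  · exact absurd ⟨i, _, _, hbc, he⟩ hns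

end PCPSolvable

section PCP

open Tm PCPSym

variable {A : Type} {n : ℕ} {u v : Fin n → List A}

local notation "ε" => Tm.app PCPSym.eps []

theorem encodeStr_append {V : Type} (w₁ w₂ : List A) (t : Tm (PCPSym A) V) :
    encodeStr (w₁ ++ w₂) t = encodeStr w₁ (encodeStr w₂ t) := by
  induction w₁ with
  | nil => rfl
  | cons a w ih => simp [encodeStr, ih]

theorem subst_encodeStr {V : Type} (σ : V → Tm (PCPSym A) V) (w : List A) (t : Tm (PCPSym A) V) :
    (encodeStr w t).subst σ = encodeStr w (t.subst σ) := by
  induction w with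
  | nil => rfl
  | cons a w ih => simp [encodeStr, subst_app, ih]

theorem subAt_encodeStr {V : Type} (w : List A) (t : Tm (PCPSym A) V) :
    (encodeStr w t).subAt (List.replicate w.length 0) = some t := by
  induction w with
  | nil => simp [encodeStr]
  | cons a w ih => simpa [encodeStr, List.replicate_succ] using ih

theorem exists_eq_encodeStr_of_subAt {V : Type} {w : List A} {q : List ℕ}
    {s : Tm (PCPSym A) V} (h : (encodeStr w ε).subAt q = some s) :
    ∃ w', s = encodeStr w' ε := by
  induction w generalizing q with
  | nil =>
    rcases q with _ | ⟨j, q⟩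
    · exact ⟨[], by simpa [encodeStr] using h.symm⟩
    · simp [encodeStr] at h
  | cons a w ih =>
    rcases q with _ | ⟨_ | j, q⟩
    · exact ⟨a :: w, by simpa using h.symm⟩
    · exact ih (by simpa [encodeStr] using h)
    · simp [encodeStr] at h

theorem rewAt_nil_pcpTRS_iff {s t : Tm (PCPSym A) ℕ} :
    RewAt (pcpTRS n u v) [] s t ↔
      (∃ a, s = app fS [a] ∧ t = app gS [a, a, a]) ∨
      (∃ i a b c, s = app gS [a, encodeStr (u i) b, encodeStr (v i) c] ∧
        t = app hS [a, b, c]) ∨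
      (∃ i a b c, s = app hS [a, encodeStr (u i) b, encodeStr (v i) c] ∧
        t = app hS [a, b, c]) ∨
      (∃ a, s = app hS [a, ε, ε] ∧ t = app fS [a]) := by
  rw [rewAt_nil_iff]
  constructor
  · rintro ⟨r, hr, σ, rfl, rfl⟩
    simp only [pcpTRS, Set.mem_union, Set.mem_singleton_iff, Set.mem_ofPred_eq] at hr
    rcases hr with (rfl | ⟨i, rfl | rfl⟩) | rfl <;> simp [subst_app, subst_encodeStr] <;>
      exact ⟨i, rfl, rfl⟩
  · rintro (⟨a, rfl, rfl⟩ | ⟨i, a, b, c, rfl, rfl⟩ | ⟨i, a, b, c, rfl, rfl⟩ | ⟨a, rfl, rfl⟩)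
    · exact ⟨_, Or.inl (Or.inl rfl), fun _ => a, by simp [subst_app], by simp [subst_app]⟩
    · exact ⟨_, Or.inl (Or.inr ⟨i, Or.inl rfl⟩), fun x => [a, b, c].getD x a,
        by simp [subst_app, subst_encodeStr], by simp [subst_app]⟩
    · exact ⟨_, Or.inl (Or.inr ⟨i, Or.inr rfl⟩), fun x => [a, b, c].getD x a,
        by simp [subst_app, subst_encodeStr], by simp [subst_app]⟩
    · exact ⟨_, Or.inr rfl, fun _ => a, by simp [subst_app], by simp [subst_app]⟩

def spineNode : PCPSym A → List (List A × Bool) → List A × Bool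
  | letter a, [s] => (a :: s.1, s.2)
  | eps, [] => ([], true)
  | _, _ => ([], false)

def spine {V : Type} : Tm (PCPSym A) V → List A × Bool
  | var _ => ([], false)
  | app f ts => spineNode f (ts.attach.map fun t => spine t.1)
decreasing_by all_goals (simp_wf; have := List.sizeOf_lt_of_mem t.2; omega)

section Spine

variable {V : Type}

theorem spine_app (f : PCPSym A) (ts : List (Tm (PCPSym A) V)) :
    spine (app f ts) = spineNode f (ts.map spine) := by
  rw [spine, List.attach_map_val]

@[simp] theorem spine_eps : spine (ε : Tm (PCPSym A) V) = ([], true) := by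
  simp [spine_app, spineNode]

theorem spine_encodeStr (w : List A) (t : Tm (PCPSym A) V) :
    spine (encodeStr w t) = (w ++ (spine t).1, (spine t).2) := by
  induction w with
  | nil => rfl
  | cons a w ih => simp [encodeStr, spine_app, spineNode, ih]

theorem spine_cases (t : Tm (PCPSym A) V) :
    (∃ a t', t = app (letter a) [t']) ∨ t = ε ∨ spine t = ([], false) := by
  rcases t with x | ⟨f, ts⟩
  · simp [spine]
  rw [spine_app, spineNode.eq_def]
  split <;> aesop

theorem eq_eps_of_spine {t : Tm (PCPSym A) V} (h : spine t = ([], true)) : t = ε := by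
  rcases spine_cases t with ⟨a, t', rfl⟩ | rfl | h'
  · simp [spine_app, spineNode] at h
  · rfl
  · simp [h'] at h

theorem exists_eq_encodeStr_of_prefix {w : List A} {t : Tm (PCPSym A) V}
    (h : w <+: (spine t).1) : ∃ t', t = encodeStr w t' := by
  induction w generalizing t with
  | nil => exact ⟨t, rfl⟩
  | cons a w ih =>
    rcases spine_cases t with ⟨b, t', rfl⟩ | rfl | h'
    · simp only [spine_app, spineNode, List.map_cons, List.map_nil, List.cons_prefix_cons] at h
      obtain ⟨t'', rfl⟩ := ih h.2
      exact ⟨t'', by rw [h.1]; rfl⟩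
    · simp at h
    · simp [h'] at h

end Spine

theorem spine_eq_of_rewAt_nil {s t : Tm (PCPSym A) ℕ} (h : RewAt (pcpTRS n u v) [] s t) :
    spine s = ([], false) ∧ spine t = ([], false) := by
  rcases rewAt_nil_pcpTRS_iff.mp h with
    ⟨_, rfl, rfl⟩ | ⟨_, _, _, _, rfl, rfl⟩ | ⟨_, _, _, _, rfl, rfl⟩ | ⟨_, rfl, rfl⟩ <;>
    simp [spine_app, spineNode]

theorem nf_encodeStr_eps (w : List A) : NF (pcpTRS n u v) (encodeStr w ε) := by
  rintro ⟨_, _, h⟩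
  obtain ⟨s, hs, _, hroot⟩ := h.exists_rewAt_nil
  obtain ⟨w', rfl⟩ := exists_eq_encodeStr_of_subAt hs
  simpa [spine_encodeStr] using (spine_eq_of_rewAt_nil hroot).1

theorem nf_eps : NF (pcpTRS n u v) ε :=
  nf_encodeStr_eps []

theorem Tiling.reflTransGen_iRew {a b c : List A} (h : Tiling u v b c) :
    Relation.ReflTransGen (IRew (pcpTRS n u v))
      (app hS [encodeStr a ε, encodeStr b ε, encodeStr c ε]) (app hS [encodeStr a ε, ε, ε]) := by
  induction h with
  | nil => rfl
  | cons i _ ih =>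
    refine .head (iRew_of_rewAt_nil ?_ (by simp [nf_encodeStr_eps])) ih
    exact rewAt_nil_pcpTRS_iff.mpr <| .inr <| .inr <| .inl
      ⟨i, _, _, _, by simp only [encodeStr_append], rfl⟩

theorem transGen_iRew_of_solution {i : Fin n} {b c : List A} (h : Tiling u v b c)
    (he : u i ++ b = v i ++ c) :
    Relation.TransGen (IRew (pcpTRS n u v))
      (app fS [encodeStr (u i ++ b) ε]) (app fS [encodeStr (u i ++ b) ε]) := by
  set a := encodeStr (u i ++ b) ε
  have hf : IRew (pcpTRS n u v) (app fS [a]) (app gS [a, a, a]) :=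
    iRew_of_rewAt_nil (rewAt_nil_pcpTRS_iff.mpr (.inl ⟨a, rfl, rfl⟩)) (by simp [a, nf_encodeStr_eps])
  have hg : IRew (pcpTRS n u v) (app gS [a, a, a]) (app hS [a, encodeStr b ε, encodeStr c ε]) := by
    refine iRew_of_rewAt_nil (rewAt_nil_pcpTRS_iff.mpr (.inr (.inl
      ⟨i, a, _, _, ?_, rfl⟩))) (by simp [a, nf_encodeStr_eps])
    rw [← encodeStr_append, ← encodeStr_append, ← he]
  have hret : IRew (pcpTRS n u v) (app hS [a, ε, ε]) (app fS [a]) :=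
    iRew_of_rewAt_nil (rewAt_nil_pcpTRS_iff.mpr (.inr (.inr (.inr ⟨a, rfl, rfl⟩))))
      (by simp [a, nf_encodeStr_eps, nf_eps])
  exact .head' hf (.head hg (h.reflTransGen_iRew.tail hret))

def Tiled (u v : Fin n → List A) (b c : List A × Bool) : Prop :=
  b.2 = true ∧ c.2 = true ∧ Tiling u v b.1 c.1

def CanStrip (u v : Fin n → List A) (b c : List A × Bool) : Prop :=
  ∃ i, u i <+: b.1 ∧ v i <+: c.1

open Classical in
noncomputable def stripWeight (u v : Fin n → List A) (a b c : List A × Bool) : ℕ :=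
  b.1.length + c.1.length + if Tiled u v b c then 2 * a.1.length + 2 else 0

open Classical in
/-- At a redex with irreducible arguments, this bounds the number of root steps still to come:
each strip step removes a nonempty tile from `b` or `c`, the step `h(a,ε,ε) → f(a)` needs `(b,c)`
tiled, and after `f(a) → g(a,a,a)` at most the `2|a|` strip steps remain, since without a
solution `(a,a)` is never tiled. -/
noncomputable def pcpWeight (u v : Fin n → List A) : PCPSym A → List (List A × Bool) → ℕ
  | fS, [a] => 2 * a.1.length + 1
  | gS, [a, b, c] => if CanStrip u v b c then stripWeight u v a b c else 0
  | hS, [a, b, c] =>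
    if CanStrip u v b c ∨ (b = ([], true) ∧ c = ([], true)) then stripWeight u v a b c else 0
  | _, _ => 0

theorem pcpWeight_eq_zero_of_nf {f : PCPSym A} {ts : List (Tm (PCPSym A) ℕ)}
    (h : NF (pcpTRS n u v) (app f ts)) : pcpWeight u v f (ts.map spine) = 0 := by
  have strip : ∀ X, X = gS ∨ X = hS → ∀ a b c, NF (pcpTRS n u v) (app X [a, b, c]) →
      ¬ CanStrip u v (spine b) (spine c) := by
    rintro X hX a b c h ⟨i, hb, hc⟩
    obtain ⟨b', rfl⟩ := exists_eq_encodeStr_of_prefix hb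
    obtain ⟨c', rfl⟩ := exists_eq_encodeStr_of_prefix hc
    rcases hX with rfl | rfl
    · exact h ⟨_, [], rewAt_nil_pcpTRS_iff.mpr (.inr (.inl ⟨i, a, b', c', rfl, rfl⟩))⟩
    · exact h ⟨_, [], rewAt_nil_pcpTRS_iff.mpr (.inr (.inr (.inl ⟨i, a, b', c', rfl, rfl⟩)))⟩
  rw [pcpWeight.eq_def]
  split
  · next heq =>
    obtain ⟨a, rfl, -⟩ := List.map_eq_singleton_iff.mp heq
    exact absurd ⟨_, [], rewAt_nil_pcpTRS_iff.mpr (.inl ⟨a, rfl, rfl⟩)⟩ h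
  · next heq =>
    obtain ⟨a, b, c, rfl, -, rfl, rfl⟩ : ∃ a b c, ts = [a, b, c] ∧ _ := by
      simpa [List.map_eq_cons_iff] using heq
    rw [if_neg (strip _ (.inl rfl) a b c h)]
  · next heq =>
    obtain ⟨a, b, c, rfl, -, rfl, rfl⟩ : ∃ a b c, ts = [a, b, c] ∧ _ := by
      simpa [List.map_eq_cons_iff] using heq
    rw [if_neg]
    rintro (hs | ⟨hb, hc⟩)
    · exact strip _ (.inr rfl) a b c h hs
    · rw [eq_eps_of_spine hb, eq_eps_of_spine hc] at h
      exact h ⟨_, [], rewAt_nil_pcpTRS_iff.mpr (.inr (.inr (.inr ⟨a, rfl, rfl⟩)))⟩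
  · rfl

theorem weight_pcpWeight_app_of_nf {f : PCPSym A} {ts : List (Tm (PCPSym A) ℕ)}
    (hts : ∀ x ∈ ts, NF (pcpTRS n u v) x) :
    weight (pcpWeight u v) spine (app f ts) = pcpWeight u v f (ts.map spine) :=
  weight_app_of_nf (fun _ _ => pcpWeight_eq_zero_of_nf) hts

theorem stripWeight_lt (hns : ¬ PCPSolvable u v) (i : Fin n) (a b c : List A × Bool) :
    stripWeight u v a b c < stripWeight u v a (u i ++ b.1, b.2) (v i ++ c.1, c.2) := by
  have hpos := PCPSolvable.tile_length_pos hns i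
  have htiled : Tiled u v b c → Tiled u v (u i ++ b.1, b.2) (v i ++ c.1, c.2) :=
    fun ⟨hb, hc, h⟩ => ⟨hb, hc, h.cons i⟩
  unfold stripWeight
  split_ifs <;> simp_all <;> omega

theorem pcpWeight_strip_lt (hns : ¬ PCPSolvable u v)
    {X : PCPSym A} (hX : X = gS ∨ X = hS) (i : Fin n) (a b c : List A × Bool) :
    pcpWeight u v hS [a, b, c] < pcpWeight u v X [a, (u i ++ b.1, b.2), (v i ++ c.1, c.2)] := by
  have hcan : CanStrip u v (u i ++ b.1, b.2) (v i ++ c.1, c.2) :=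
    ⟨i, List.prefix_append _ _, List.prefix_append _ _⟩
  calc pcpWeight u v hS [a, b, c] ≤ stripWeight u v a b c := by
        simp only [pcpWeight]; split_ifs <;> omega
    _ < stripWeight u v a (u i ++ b.1, b.2) (v i ++ c.1, c.2) := stripWeight_lt hns i a b c
    _ = pcpWeight u v X [a, (u i ++ b.1, b.2), (v i ++ c.1, c.2)] := by
        rcases hX with rfl | rfl <;> simp [pcpWeight, hcan]

theorem weight_strip_lt (hns : ¬ PCPSolvable u v)
    {X : PCPSym A} (hX : X = gS ∨ X = hS) (i : Fin n) {a b c : Tm (PCPSym A) ℕ}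
    (ha : NF (pcpTRS n u v) a) (hb : NF (pcpTRS n u v) (encodeStr (u i) b))
    (hc : NF (pcpTRS n u v) (encodeStr (v i) c)) :
    weight (pcpWeight u v) spine (app hS [a, b, c]) <
      weight (pcpWeight u v) spine (app X [a, encodeStr (u i) b, encodeStr (v i) c]) := by
  rw [weight_pcpWeight_app_of_nf (by simp [ha, hb.subAt (subAt_encodeStr _ _),
      hc.subAt (subAt_encodeStr _ _)]), weight_pcpWeight_app_of_nf (by simp [ha, hb, hc])]
  simpa [spine_encodeStr] using pcpWeight_strip_lt hns hX i (spine a) (spine b) (spine c)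

theorem pcpWeight_g_lt_f (hns : ¬ PCPSolvable u v) (a : List A × Bool) :
    pcpWeight u v gS [a, a, a] < pcpWeight u v fS [a] := by
  simp only [pcpWeight]
  split_ifs with hcan
  · have hnot : ¬ Tiled u v a a := by
      rintro ⟨-, -, h⟩
      obtain ⟨i, hu, hv⟩ := hcan
      have hpos := PCPSolvable.tile_length_pos hns i
      rw [PCPSolvable.eq_nil_of_tiling_self hns h] at hu hv
      simp_all
    simp [stripWeight, hnot]
    omega
  · omega

theorem pcpWeight_f_lt_h (a : List A × Bool) :
    pcpWeight u v fS [a] < pcpWeight u v hS [a, ([], true), ([], true)] := by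
  simp [pcpWeight, stripWeight, Tiled, Tiling.nil]

theorem weight_pcpWeight_lt_of_rewAt_nil (hns : ¬ PCPSolvable u v)
    {s t : Tm (PCPSym A) ℕ} (h : RewAt (pcpTRS n u v) [] s t)
    (hin : ∀ q w, q ≠ [] → s.subAt q = some w → NF (pcpTRS n u v) w) :
    weight (pcpWeight u v) spine t < weight (pcpWeight u v) spine s := by
  rcases rewAt_nil_pcpTRS_iff.mp h with
    ⟨a, rfl, rfl⟩ | ⟨i, a, b, c, rfl, rfl⟩ | ⟨i, a, b, c, rfl, rfl⟩ | ⟨a, rfl, rfl⟩ <;>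
    have hargs := forall_subAt_nf_iff.mp hin <;>
    simp only [List.mem_cons, List.not_mem_nil, or_false, forall_eq_or_imp, forall_eq] at hargs
  · rw [weight_pcpWeight_app_of_nf (by simpa using hargs), weight_pcpWeight_app_of_nf (by simpa using hargs)]
    exact pcpWeight_g_lt_f hns _
  · exact weight_strip_lt hns (.inl rfl) i hargs.1 hargs.2.1 hargs.2.2
  · exact weight_strip_lt hns (.inr rfl) i hargs.1 hargs.2.1 hargs.2.2
  · rw [weight_pcpWeight_app_of_nf (by simpa using hargs.1), weight_pcpWeight_app_of_nf (by simp [hargs])]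
    simpa using pcpWeight_f_lt_h (spine a)

theorem pcpTRS_not_exists_iRew_chain (hns : ¬ PCPSolvable u v) :
    ¬ ∃ f : ℕ → Tm (PCPSym A) ℕ, ∀ k, IRew (pcpTRS n u v) (f k) (f (k + 1)) :=
  not_exists_iRew_chain_of_weight (W := pcpWeight u v) spine_app
    (fun _ _ h => by rw [(spine_eq_of_rewAt_nil h).1, (spine_eq_of_rewAt_nil h).2])
    (fun _ _ => weight_pcpWeight_lt_of_rewAt_nil hns)

theorem pcpTRS_rightFlat : ∀ r ∈ pcpTRS n u v, r.RightFlat := by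
  intro r hr
  simp only [pcpTRS, Set.mem_union, Set.mem_singleton_iff, Set.mem_ofPred_eq] at hr
  rcases hr with (rfl | ⟨i, rfl | rfl⟩) | rfl <;> simp [Rule.RightFlat, Tm.Flat, Tm.height]

end PCP

/-- The TRS of the reduction is right-flat, and it is innermost
non-terminating iff the PCP instance has a solution. -/
theorem stmt18 {A : Type} (n : ℕ) (u v : Fin n → List A) :
    (∀ r ∈ pcpTRS n u v, r.RightFlat) ∧
    ((∃ f : ℕ → Tm (PCPSym A) ℕ, ∀ k, IRew (pcpTRS n u v) (f k) (f (k + 1))) ↔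
      ∃ (k : ℕ), 0 < k ∧ ∃ idx : Fin k → Fin n,
        (List.ofFn fun j => u (idx j)).flatten =
          (List.ofFn fun j => v (idx j)).flatten) := by
  refine ⟨pcpTRS_rightFlat, ?_⟩
  rw [← PCPSolvable.iff_exists_ofFn]
  constructor
  · intro hchain
    by_contra hns
    exact pcpTRS_not_exists_iRew_chain hns hchain
  · rintro ⟨i, b, c, h, he⟩
    exact exists_chain_of_transGen_self (transGen_iRew_of_solution h he)
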